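/- Regard each label Q(p), for p ∈ X_d(m,m'), as an element of the field ℂ(T_1,...,T_n) of rational functions in n = l_{m-1}+d independent variables (substituting the variable T_j for τ_j, with the conventions T_{l_ζ+0} := 1 and T_{l_ζ+r+1} := 1). Then the map p ↦ Q(p) is injective on X_d(m,m'): if p, p' ∈ X_d(m,m') and p ≠ p', then Q(p) ≠ Q(p'). -/

import Mathlib

open Matrix BigOperators

noncomputable section

/-- Cartan matrix of type A (1-based indices). -/
def cartan (i j : ℕ) : ℤ :=
  if i = j then 2 else if i = j + 1 ∨ j = i + 1 then -1 else 0

/-- `y_i(t)`: identity except the `(i+1,i)` entry (1-based) equals `t`. -/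
def yMat (r i : ℕ) (t : ℂ) : Matrix (Fin (r + 1)) (Fin (r + 1)) ℂ :=
  Matrix.of fun a b =>
    if a = b then 1 else if a.val = i ∧ b.val + 1 = i then t else 0

/-- `α_i^∨(c)`: diagonal matrix with `c` in position `i`, `c⁻¹` in position `i+1` (1-based). -/
def alphaMat (r i : ℕ) (c : ℂ) : Matrix (Fin (r + 1)) (Fin (r + 1)) ℂ :=
  Matrix.of fun a b =>
    if a = b then (if a.val + 1 = i then c else if a.val = i then c⁻¹ else 1) else 0

/-- `x_{-i}(t)`: identity except entries `(i,i) = t⁻¹`, `(i+1,i) = 1`, `(i+1,i+1) = t` (1-based). -/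
def xneg (r i : ℕ) (t : ℂ) : Matrix (Fin (r + 1)) (Fin (r + 1)) ℂ :=
  Matrix.of fun a b =>
    if a.val + 1 = i ∧ b.val + 1 = i then t⁻¹
    else if a.val = i ∧ b.val + 1 = i then 1
    else if a = b then (if a.val = i then t else 1)
    else 0

/-- `l_ζ = r + (r-1) + ⋯ + (r-ζ+1)`. -/
def lv (r : ℕ) : ℕ → ℕ
  | 0 => 0
  | z + 1 => lv r z + (r - z)

/-- One cycle `x_{-1}(τ_{base+1}) x_{-2}(τ_{base+2}) ⋯ x_{-len}(τ_{base+len})`. -/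
def cyc (r : ℕ) (τ : ℕ → ℂ) (base len : ℕ) : Matrix (Fin (r + 1)) (Fin (r + 1)) ℂ :=
  ((List.range len).map fun j => xneg r (j + 1) (τ (base + j + 1))).prod

/-- The matrix `M(τ) = x_{-i_1}(τ_1) ⋯ x_{-i_n}(τ_n)` for the word with `m-1` full cycles
`(1,…,r-ζ+1)` followed by a last cycle `(1,…,d)`. -/
def Mword (r m d : ℕ) (τ : ℕ → ℂ) : Matrix (Fin (r + 1)) (Fin (r + 1)) ℂ :=
  ((List.range (m - 1)).map fun z => cyc r τ (lv r z) (r - z)).prod *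
    cyc r τ (lv r (m - 1)) d

/-- Determinant of the `d×d` submatrix with rows `m'+1,…,m'+d` and columns `1,…,d` (1-based). -/
def minorD (r m' d : ℕ) (M : Matrix (Fin (r + 1)) (Fin (r + 1)) ℂ) : ℂ :=
  (M.submatrix (fun p : Fin d => (Fin.ofNat (r + 1) (m' + p.val : ℕ)))
      (fun q : Fin d => (Fin.ofNat (r + 1) (q.val : ℕ)))).det

/-- `τ_{l_ζ + j}`, with the conventions `τ_{l_ζ+0} := 1` and `τ_{l_ζ+r+1} := 1`. -/
def tau2 {K : Type*} [Field K] (r : ℕ) (τ : ℕ → K) (z j : ℕ) : K :=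
  if j = 0 ∨ j = r + 1 then 1 else τ (lv r z + j)

/-- The Laurent monomial `C̄(ζ,j) = τ_{l_ζ+j-1} / τ_{l_ζ+j}`. -/
def Cbar {K : Type*} [Field K] (r : ℕ) (τ : ℕ → K) (z j : ℕ) : K :=
  tau2 r τ z (j - 1) / tau2 r τ z j

/-- The Laurent monomial `A_{ζ,j} = (τ_{l_ζ+j} τ_{l_{ζ+1}+j}) / (τ_{l_ζ+j+1} τ_{l_{ζ+1}+j-1})`. -/
def Amon {K : Type*} [Field K] (r : ℕ) (τ : ℕ → K) (z j : ℕ) : K :=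
  tau2 r τ z j * tau2 r τ (z + 1) j / (tau2 r τ z (j + 1) * tau2 r τ (z + 1) (j - 1))

/-- Membership in `X_d(m,m')`: families `(a^{(s)}_i)` of positive integers, strictly increasing
in `i`, going up by `0` or `1` in `s`, with `a^{(0)}_i = i` and `a^{(m)}_i = m'+i` (1-based `i`). -/
def IsPath (m d m' : ℕ) (p : Fin (m + 1) → Fin d → ℕ) : Prop :=
  (∀ s i, 1 ≤ p s i) ∧
  (∀ (s : Fin (m + 1)) (i i' : Fin d), i < i' → p s i < p s i') ∧
  (∀ (s : Fin m) (i : Fin d),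
    p s.succ i = p s.castSucc i ∨ p s.succ i = p s.castSucc i + 1) ∧
  (∀ i : Fin d, p 0 i = i.val + 1 ∧ p (Fin.last m) i = m' + i.val + 1)

instance (m d m' : ℕ) (p : Fin (m + 1) → Fin d → ℕ) : Decidable (IsPath m d m' p) := by
  unfold IsPath; infer_instance

/-- The label `Q(p) = ∏_{s=0}^{m-1} ∏_{i=1}^{d} τ_{l_{m-s-1}+a^{(s+1)}_i-1} / τ_{l_{m-s-1}+a^{(s)}_i}`. -/
def Qlab {K : Type*} [Field K] (r m d : ℕ) (τ : ℕ → K) (p : Fin (m + 1) → Fin d → ℕ) : K :=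
  ∏ s : Fin m, ∏ i : Fin d,
    tau2 r τ (m - 1 - s.val) (p s.succ i - 1) / tau2 r τ (m - 1 - s.val) (p s.castSucc i)

/-- The variables `T_1, …, T_n`, viewed in the field `ℂ(T_1,…,T_n)` of rational functions
(the fraction field of the multivariate polynomial ring). -/
def tauVar (n : ℕ) : ℕ → FractionRing (MvPolynomial (Fin n) ℂ) := fun j =>
  if h : 1 ≤ j ∧ j ≤ n then
    algebraMap (MvPolynomial (Fin n) ℂ) (FractionRing (MvPolynomial (Fin n) ℂ))
      (MvPolynomial.X (⟨j - 1, by omega⟩ : Fin n))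
  else 1

namespace S14

lemma lv_succ (r z : ℕ) : lv r (z + 1) = lv r z + (r - z) := rfl

lemma lv_mono (r : ℕ) {z z' : ℕ} (h : z ≤ z') : lv r z ≤ lv r z' := by
  induction z' with
  | zero =>
    have hz : z = 0 := by omega
    subst hz; exact le_rfl
  | succ k ih =>
    rcases Nat.lt_or_ge z (k + 1) with h' | h'
    · have := ih (by omega)
      rw [lv_succ]; omega
    · have hz : z = k + 1 := by omega
      rw [hz]

lemma lv_add_le (r : ℕ) : ∀ (c z : ℕ), z + c ≤ r → lv r z + c ≤ lv r (z + c)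
  | 0, z, _ => by simp
  | c + 1, z, h => by
    have h1 := lv_add_le r c z (by omega)
    have h2 : lv r (z + c + 1) = lv r (z + c) + (r - (z + c)) := rfl
    have h3 : z + (c + 1) = z + c + 1 := by omega
    rw [h3, h2]; omega

lemma lv_inj (r : ℕ) {z z' j j' : ℕ} (hj1 : 1 ≤ j) (hjr : j ≤ r - z)
    (hj'1 : 1 ≤ j') (hj'r : j' ≤ r - z') (h : lv r z + j = lv r z' + j') :
    z = z' ∧ j = j' := by
  rcases lt_trichotomy z z' with hzz | hzz | hzz
  · exfalso
    have h1 : lv r z + j ≤ lv r (z + 1) := by rw [lv_succ]; omega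
    have h2 : lv r (z + 1) ≤ lv r z' := lv_mono r (by omega)
    omega
  · subst hzz; omega
  · exfalso
    have h1 : lv r z' + j' ≤ lv r (z' + 1) := by rw [lv_succ]; omega
    have h2 : lv r (z' + 1) ≤ lv r z := lv_mono r (by omega)
    omega

noncomputable def pvar (n k : ℕ) : MvPolynomial (Fin n) ℂ :=
  if h : 1 ≤ k ∧ k ≤ n then MvPolynomial.X (⟨k - 1, by omega⟩ : Fin n) else 1

noncomputable def pp (r n z j : ℕ) : MvPolynomial (Fin n) ℂ :=
  if j = 0 ∨ j = r + 1 then 1 else pvar n (lv r z + j)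

def cnt (n kk k : ℕ) : ℕ := if 1 ≤ k ∧ k ≤ n ∧ k = kk then 1 else 0

def cp (r n kk z j : ℕ) : ℕ := if j = 0 ∨ j = r + 1 then 0 else cnt n kk (lv r z + j)

noncomputable def NP (r n m d : ℕ) (p : Fin (m + 1) → Fin d → ℕ) : MvPolynomial (Fin n) ℂ :=
  ∏ s : Fin m, ∏ i : Fin d, pp r n (m - 1 - s.val) (p s.succ i - 1)

noncomputable def DP (r n m d : ℕ) (p : Fin (m + 1) → Fin d → ℕ) : MvPolynomial (Fin n) ℂ :=
  ∏ s : Fin m, ∏ i : Fin d, pp r n (m - 1 - s.val) (p s.castSucc i)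

def SN (r n m d kk : ℕ) (p : Fin (m + 1) → Fin d → ℕ) : ℕ :=
  ∑ s : Fin m, ∑ i : Fin d, cp r n kk (m - 1 - s.val) (p s.succ i - 1)

def SD (r n m d kk : ℕ) (p : Fin (m + 1) → Fin d → ℕ) : ℕ :=
  ∑ s : Fin m, ∑ i : Fin d, cp r n kk (m - 1 - s.val) (p s.castSucc i)

lemma tau2_eq (r n z j : ℕ) :
    tau2 r (tauVar n) z j
      = algebraMap (MvPolynomial (Fin n) ℂ) (FractionRing (MvPolynomial (Fin n) ℂ))
          (pp r n z j) := by
  simp only [tau2, pp, tauVar, pvar]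
  split_ifs <;> simp

lemma Qlab_eq (r m d n : ℕ) (p : Fin (m + 1) → Fin d → ℕ) :
    Qlab r m d (tauVar n) p
      = algebraMap (MvPolynomial (Fin n) ℂ) (FractionRing (MvPolynomial (Fin n) ℂ))
          (NP r n m d p)
        / algebraMap (MvPolynomial (Fin n) ℂ) (FractionRing (MvPolynomial (Fin n) ℂ))
          (DP r n m d p) := by
  unfold Qlab NP DP
  simp only [tau2_eq, map_prod, ← Finset.prod_div_distrib]

lemma pp_ne_zero (r n z j : ℕ) : pp r n z j ≠ 0 := by
  unfold pp pvar
  split_ifs <;> simp [MvPolynomial.X_ne_zero]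

lemma NP_ne_zero (r n m d : ℕ) (p : Fin (m + 1) → Fin d → ℕ) : NP r n m d p ≠ 0 := by
  unfold NP
  exact Finset.prod_ne_zero_iff.mpr fun s _ =>
    Finset.prod_ne_zero_iff.mpr fun i _ => pp_ne_zero _ _ _ _

lemma DP_ne_zero (r n m d : ℕ) (p : Fin (m + 1) → Fin d → ℕ) : DP r n m d p ≠ 0 := by
  unfold DP
  exact Finset.prod_ne_zero_iff.mpr fun s _ =>
    Finset.prod_ne_zero_iff.mpr fun i _ => pp_ne_zero _ _ _ _

lemma eval_pp (r n kk z j : ℕ) :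
    MvPolynomial.eval (fun v : Fin n => if (v : ℕ) + 1 = kk then (2 : ℂ) else 1) (pp r n z j)
      = 2 ^ cp r n kk z j := by
  unfold pp cp pvar cnt
  by_cases hb : j = 0 ∨ j = r + 1
  · simp [hb]
  · rw [if_neg hb, if_neg hb]
    by_cases hk : 1 ≤ lv r z + j ∧ lv r z + j ≤ n
    · rw [dif_pos hk, MvPolynomial.eval_X]
      have hk1 := hk.1
      have hk2 := hk.2
      show (if lv r z + j - 1 + 1 = kk then (2 : ℂ) else 1)
        = 2 ^ (if 1 ≤ lv r z + j ∧ lv r z + j ≤ n ∧ lv r z + j = kk then 1 else 0)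
      split_ifs with h1 h2
      · norm_num
      · exfalso; omega
      · exfalso; omega
      · norm_num
    · rw [dif_neg hk, _root_.map_one, if_neg (by tauto)]
      norm_num

lemma eval_NP (r n m d kk : ℕ) (p : Fin (m + 1) → Fin d → ℕ) :
    MvPolynomial.eval (fun v : Fin n => if (v : ℕ) + 1 = kk then (2 : ℂ) else 1) (NP r n m d p)
      = 2 ^ SN r n m d kk p := by
  unfold NP SN
  simp only [map_prod, eval_pp, Finset.prod_pow_eq_pow_sum]

lemma eval_DP (r n m d kk : ℕ) (p : Fin (m + 1) → Fin d → ℕ) :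
    MvPolynomial.eval (fun v : Fin n => if (v : ℕ) + 1 = kk then (2 : ℂ) else 1) (DP r n m d p)
      = 2 ^ SD r n m d kk p := by
  unfold DP SD
  simp only [map_prod, eval_pp, Finset.prod_pow_eq_pow_sum]

lemma cp_eval (r m d t j s jj : ℕ) (hmr : m ≤ r) (hd : d ≤ r - m + 1)
    (htm : t < m) (hj1 : 1 ≤ j) (hjr : j ≤ r - (m - 1 - t))
    (hsm : s < m) (hjj : jj ≤ s + d) :
    cp r (lv r (m - 1) + d) (lv r (m - 1 - t) + j) (m - 1 - s) jj
      = if s = t ∧ jj = j then 1 else 0 := by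
  by_cases h0 : jj = 0 ∨ jj = r + 1
  · rcases h0 with h0 | h0
    · subst h0
      unfold cp
      rw [if_pos (Or.inl rfl), if_neg (by omega)]
    · exact absurd h0 (by omega)
  · unfold cp cnt
    rw [if_neg h0]
    have hjj1 : 1 ≤ jj := by omega
    have hjjr : jj ≤ r - (m - 1 - s) := by omega
    have hlv : lv r (m - 1 - s) + s ≤ lv r (m - 1) := by
      have h := lv_add_le r s (m - 1 - s) (by omega)
      rwa [show m - 1 - s + s = m - 1 from by omega] at h
    by_cases hst : s = t ∧ jj = j
    · rw [if_pos ⟨by omega, by omega, by rw [hst.1, hst.2]⟩, if_pos hst]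
    · rw [if_neg, if_neg hst]
      rintro ⟨-, -, hk⟩
      obtain ⟨h1, h2⟩ := lv_inj r hjj1 hjjr hj1 hjr hk
      exact hst ⟨by omega, h2⟩

lemma sum_reduce (r m d t j : ℕ) (hmr : m ≤ r) (hd : d ≤ r - m + 1)
    (htm : t < m) (hj1 : 1 ≤ j) (hjr : j ≤ r - (m - 1 - t))
    (w : Fin m → Fin d → ℕ) (hw : ∀ s i, w s i ≤ (s : ℕ) + d) :
    (∑ s : Fin m, ∑ i : Fin d,
        cp r (lv r (m - 1) + d) (lv r (m - 1 - t) + j) (m - 1 - (s : ℕ)) (w s i))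
      = ∑ i : Fin d, if w ⟨t, htm⟩ i = j then 1 else 0 := by
  have hterm : ∀ (s : Fin m) (i : Fin d),
      cp r (lv r (m - 1) + d) (lv r (m - 1 - t) + j) (m - 1 - (s : ℕ)) (w s i)
        = if (s : ℕ) = t ∧ w s i = j then 1 else 0 :=
    fun s i => cp_eval r m d t j s (w s i) hmr hd htm hj1 hjr s.isLt (hw s i)
  simp only [hterm]
  rw [Finset.sum_eq_single (⟨t, htm⟩ : Fin m)]
  · exact Finset.sum_congr rfl fun i _ => by simp
  · intro s _ hs
    refine Finset.sum_eq_zero fun i _ => if_neg ?_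
    rintro ⟨h1, -⟩
    exact hs (Fin.ext h1)
  · intro h
    exact absurd (Finset.mem_univ _) h

lemma path_ub {m d m' : ℕ} {p : Fin (m + 1) → Fin d → ℕ} (hp : IsPath m d m' p) :
    ∀ (q : Fin (m + 1)) (i : Fin d), p q i ≤ (q : ℕ) + (i : ℕ) + 1 := by
  have key : ∀ t (ht : t < m + 1) (i : Fin d), p ⟨t, ht⟩ i ≤ t + (i : ℕ) + 1 := by
    intro t
    induction t with
    | zero =>
      intro ht i
      have h0 := (hp.2.2.2 i).1
      have e0 : (⟨0, ht⟩ : Fin (m + 1)) = 0 := rfl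
      rw [e0, h0]
      omega
    | succ t ih =>
      intro ht i
      have htm : t < m := by omega
      have h3 := hp.2.2.1 ⟨t, htm⟩ i
      have hih := ih (by omega) i
      have hcs : (⟨t, htm⟩ : Fin m).castSucc = (⟨t, by omega⟩ : Fin (m + 1)) := rfl
      have hsc : (⟨t, htm⟩ : Fin m).succ = (⟨t + 1, ht⟩ : Fin (m + 1)) := rfl
      rw [hcs, hsc] at h3
      omega
  intro q i
  have := key q.val q.isLt i
  simpa using this

lemma ex_iff {d : ℕ} (P : Fin d → Prop) [DecidablePred P] :
    (∃ i, P i) ↔ (∑ i : Fin d, if P i then 1 else 0) ≠ 0 := by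
  rw [Ne, Finset.sum_eq_zero_iff]
  simp

lemma helper {d : ℕ} (b f g : Fin d → ℕ)
    (hfm : ∀ i i' : Fin d, i < i' → f i < f i')
    (hgm : ∀ i i' : Fin d, i < i' → g i < g i')
    (hb1 : ∀ i, 1 ≤ b i)
    (hmem : ∀ v, 2 ≤ v → ((∃ i, f i = v) ↔ ∃ i, g i = v))
    (i : Fin d) (hmax : ∀ i', i < i' → f i' = g i')
    (h1 : f i = b i) (h2 : g i = b i + 1) : False := by
  obtain ⟨i', hi'⟩ := (hmem (b i + 1) (by have := hb1 i; omega)).mpr ⟨i, h2⟩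
  have hlt : i < i' := by
    rcases lt_trichotomy i i' with h | h | h
    · exact h
    · exfalso; rw [← h] at hi'; omega
    · exfalso; have := hfm i' i h; omega
  have hgi' : g i' = f i' := (hmax i' hlt).symm
  have := hgm i i' hlt
  omega

lemma aux {d : ℕ} (b f g : Fin d → ℕ)
    (hfm : ∀ i i' : Fin d, i < i' → f i < f i')
    (hgm : ∀ i i' : Fin d, i < i' → g i < g i')
    (hbf : ∀ i, f i = b i ∨ f i = b i + 1)
    (hbg : ∀ i, g i = b i ∨ g i = b i + 1)
    (hb1 : ∀ i, 1 ≤ b i)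
    (hmem : ∀ v, 2 ≤ v → ((∃ i, f i = v) ↔ ∃ i, g i = v)) :
    ∀ i, f i = g i := by
  by_contra hc
  push_neg at hc
  obtain ⟨i₀, hi₀⟩ := hc
  have hS : (Finset.univ.filter (fun i => f i ≠ g i)).Nonempty :=
    ⟨i₀, by simp [hi₀]⟩
  obtain ⟨i, hiS, hmax⟩ :=
    Finset.exists_max_image (Finset.univ.filter (fun i => f i ≠ g i)) (fun i => (i : ℕ)) hS
  have hfg : f i ≠ g i := by simpa using hiS
  have hmax' : ∀ i', i < i' → f i' = g i' := by
    intro i' h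
    by_contra hne'
    have h2 := hmax i' (by simpa using hne')
    have : (i : ℕ) < (i' : ℕ) := h
    omega
  rcases hbf i with h1 | h1 <;> rcases hbg i with h2 | h2
  · exact hfg (h1.trans h2.symm)
  · exact helper b f g hfm hgm hb1 hmem i hmax' h1 h2
  · exact helper b g f hgm hfm hb1 (fun v hv => (hmem v hv).symm) i
      (fun i' h => (hmax' i' h).symm) h2 h1
  · exact hfg (by omega)

end S14

/-- the map `p ↦ Q(p)`, valued in `ℂ(T_1,…,T_n)`, is injective on `X_d(m,m')`. -/
theorem statement14 (r m d m' : ℕ) (hr : 1 ≤ r) (hm1 : 1 ≤ m) (hmr : m ≤ r)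
    (hd1 : 1 ≤ d) (hd : d ≤ r - m + 1) (hm'1 : 1 ≤ m') (hm'm : m' ≤ m)
    (p p' : Fin (m + 1) → Fin d → ℕ)
    (hp : IsPath m d m' p) (hp' : IsPath m d m' p') (hne : p ≠ p') :
    Qlab r m d (tauVar (lv r (m - 1) + d)) p ≠
      Qlab r m d (tauVar (lv r (m - 1) + d)) p' := by
  intro hQ
  rw [S14.Qlab_eq, S14.Qlab_eq] at hQ
  have hDp : algebraMap (MvPolynomial (Fin (lv r (m - 1) + d)) ℂ)
      (FractionRing (MvPolynomial (Fin (lv r (m - 1) + d)) ℂ))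
      (S14.DP r (lv r (m - 1) + d) m d p) ≠ 0 := fun h =>
    S14.DP_ne_zero r (lv r (m - 1) + d) m d p
      ((IsFractionRing.to_map_eq_zero_iff (K := FractionRing (MvPolynomial (Fin (lv r (m - 1) + d)) ℂ))).mp h)
  have hDp' : algebraMap (MvPolynomial (Fin (lv r (m - 1) + d)) ℂ)
      (FractionRing (MvPolynomial (Fin (lv r (m - 1) + d)) ℂ))
      (S14.DP r (lv r (m - 1) + d) m d p') ≠ 0 := fun h =>
    S14.DP_ne_zero r (lv r (m - 1) + d) m d p'
      ((IsFractionRing.to_map_eq_zero_iff (K := FractionRing (MvPolynomial (Fin (lv r (m - 1) + d)) ℂ))).mp h)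
  rw [div_eq_div_iff hDp hDp', ← _root_.map_mul, ← _root_.map_mul] at hQ
  have hpoly := IsFractionRing.injective (MvPolynomial (Fin (lv r (m - 1) + d)) ℂ)
    (FractionRing (MvPolynomial (Fin (lv r (m - 1) + d)) ℂ)) hQ
  have hE : ∀ kk : ℕ,
      S14.SN r (lv r (m - 1) + d) m d kk p + S14.SD r (lv r (m - 1) + d) m d kk p'
        = S14.SN r (lv r (m - 1) + d) m d kk p' + S14.SD r (lv r (m - 1) + d) m d kk p := by
    intro kk
    have h1 := congrArg (MvPolynomial.eval
      (fun v : Fin (lv r (m - 1) + d) => if (v : ℕ) + 1 = kk then (2 : ℂ) else 1)) hpoly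
    rw [_root_.map_mul, _root_.map_mul, S14.eval_NP, S14.eval_NP, S14.eval_DP, S14.eval_DP,
      ← pow_add, ← pow_add] at h1
    have h2 : (2 : ℕ) ^ (S14.SN r (lv r (m - 1) + d) m d kk p
          + S14.SD r (lv r (m - 1) + d) m d kk p')
        = 2 ^ (S14.SN r (lv r (m - 1) + d) m d kk p'
          + S14.SD r (lv r (m - 1) + d) m d kk p) := by
      exact_mod_cast h1
    exact Nat.pow_right_injective (le_refl 2) h2
  have hub := S14.path_ub hp
  have hub' := S14.path_ub hp'
  have hpos := hp.1
  have hpos' := hp'.1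
  have hstep : ∀ t (ht : t < m + 1) (i : Fin d), p ⟨t, ht⟩ i = p' ⟨t, ht⟩ i := by
    intro t
    induction t with
    | zero =>
      intro ht i
      have e0 : (⟨0, ht⟩ : Fin (m + 1)) = 0 := rfl
      rw [e0, (hp.2.2.2 i).1, (hp'.2.2.2 i).1]
    | succ t ih =>
      intro ht i
      have htm : t < m := by omega
      have ht' : t < m + 1 := by omega
      have hsc : (⟨t, htm⟩ : Fin m).succ = (⟨t + 1, ht⟩ : Fin (m + 1)) := rfl
      have hcs : (⟨t, htm⟩ : Fin m).castSucc = (⟨t, ht'⟩ : Fin (m + 1)) := rfl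
      have hmem : ∀ v, 2 ≤ v →
          ((∃ i : Fin d, p ⟨t + 1, ht⟩ i = v) ↔ (∃ i : Fin d, p' ⟨t + 1, ht⟩ i = v)) := by
        intro v hv
        by_cases hvR : v ≤ r - (m - 1 - t) + 1
        · have hj1 : 1 ≤ v - 1 := by omega
          have hjr : v - 1 ≤ r - (m - 1 - t) := by omega
          have hEk := hE (lv r (m - 1 - t) + (v - 1))
          unfold S14.SN S14.SD at hEk
          have hwn : ∀ (q : Fin (m + 1) → Fin d → ℕ), IsPath m d m' q →
              ∀ (s : Fin m) (i : Fin d), q s.succ i - 1 ≤ (s : ℕ) + d := by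
            intro q hq s i
            have h := S14.path_ub hq s.succ i
            have hv1 : ((s.succ : Fin (m + 1)) : ℕ) = (s : ℕ) + 1 := rfl
            have hi := i.isLt
            omega
          have hwd : ∀ (q : Fin (m + 1) → Fin d → ℕ), IsPath m d m' q →
              ∀ (s : Fin m) (i : Fin d), q s.castSucc i ≤ (s : ℕ) + d := by
            intro q hq s i
            have h := S14.path_ub hq s.castSucc i
            have hv1 : ((s.castSucc : Fin (m + 1)) : ℕ) = (s : ℕ) := rfl
            have hi := i.isLt
            omega
          rw [S14.sum_reduce r m d t (v - 1) hmr hd htm hj1 hjr _ (hwn p hp),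
            S14.sum_reduce r m d t (v - 1) hmr hd htm hj1 hjr _ (hwd p' hp'),
            S14.sum_reduce r m d t (v - 1) hmr hd htm hj1 hjr _ (hwn p' hp'),
            S14.sum_reduce r m d t (v - 1) hmr hd htm hj1 hjr _ (hwd p hp),
            hsc, hcs] at hEk
          have hden : (∑ i : Fin d, if p' ⟨t, ht'⟩ i = v - 1 then 1 else 0)
              = ∑ i : Fin d, if p ⟨t, ht'⟩ i = v - 1 then 1 else 0 :=
            Finset.sum_congr rfl fun i _ => by rw [ih ht' i]
          rw [hden] at hEk
          have hcnt : (∑ i : Fin d, if p ⟨t + 1, ht⟩ i - 1 = v - 1 then 1 else 0)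
              = ∑ i : Fin d, if p' ⟨t + 1, ht⟩ i - 1 = v - 1 then 1 else 0 := by omega
          have hs1 : (∑ i : Fin d, if p ⟨t + 1, ht⟩ i = v then 1 else 0)
              = ∑ i : Fin d, if p ⟨t + 1, ht⟩ i - 1 = v - 1 then 1 else 0 :=
            Finset.sum_congr rfl fun i _ => by
              have := hpos ⟨t + 1, ht⟩ i
              exact if_congr (by omega) rfl rfl
          have hs2 : (∑ i : Fin d, if p' ⟨t + 1, ht⟩ i = v then 1 else 0)
              = ∑ i : Fin d, if p' ⟨t + 1, ht⟩ i - 1 = v - 1 then 1 else 0 :=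
            Finset.sum_congr rfl fun i _ => by
              have := hpos' ⟨t + 1, ht⟩ i
              exact if_congr (by omega) rfl rfl
          rw [S14.ex_iff, S14.ex_iff, hs1, hs2, hcnt]
        · constructor <;> rintro ⟨i, hi⟩ <;> exfalso
          · have h := hub ⟨t + 1, ht⟩ i
            have hq : ((⟨t + 1, ht⟩ : Fin (m + 1)) : ℕ) = t + 1 := rfl
            have hi2 := i.isLt
            omega
          · have h := hub' ⟨t + 1, ht⟩ i
            have hq : ((⟨t + 1, ht⟩ : Fin (m + 1)) : ℕ) = t + 1 := rfl
            have hi2 := i.isLt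
            omega
      have hbf : ∀ i : Fin d,
          p ⟨t + 1, ht⟩ i = p ⟨t, ht'⟩ i ∨ p ⟨t + 1, ht⟩ i = p ⟨t, ht'⟩ i + 1 := by
        intro i
        have h3 := hp.2.2.1 ⟨t, htm⟩ i
        rwa [hsc, hcs] at h3
      have hbg : ∀ i : Fin d,
          p' ⟨t + 1, ht⟩ i = p ⟨t, ht'⟩ i ∨ p' ⟨t + 1, ht⟩ i = p ⟨t, ht'⟩ i + 1 := by
        intro i
        have h3 := hp'.2.2.1 ⟨t, htm⟩ i
        rw [hsc, hcs] at h3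
        rwa [← ih ht' i] at h3
      exact S14.aux (fun i => p ⟨t, ht'⟩ i) (fun i => p ⟨t + 1, ht⟩ i)
        (fun i => p' ⟨t + 1, ht⟩ i)
        (fun i i' h => hp.2.1 ⟨t + 1, ht⟩ i i' h)
        (fun i i' h => hp'.2.1 ⟨t + 1, ht⟩ i i' h)
        hbf hbg (fun i => hpos ⟨t, ht'⟩ i) hmem i
  apply hne
  funext q i
  have := hstep q.val q.isLt i
  simpa using this
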